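/- arXiv:2304.02379 — 10 statements merged into one kernel-verified Lean document; each statement's English description precedes it below -/
import Mathlib

section
/- Let A, B, C be real matrices of sizes n×n, n×m, p×n respectively, and let K be an m×p transfer matrix over F implementing the output feedback u = K y. Assume the n×n matrix z·I − A − B·K·C is invertible over F, and define the achieved closed-loop responses R = (z·I − A − B·K·C)⁻¹, N = R·B·K, M = K·C·R, L = K·C·N + K. Then these responses satisfy the first system-level affine constraint: (z·I − A)·R − B·M = I and (z·I − A)·N − B·L = 0. -/
open Matrix
noncomputable section

/-- The field of real rational functions in the variable `z`. -/
abbrev F : Type := RatFunc ℝ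

/-- Entrywise embedding of a real matrix as a constant transfer matrix over `F`. -/
def emb {a b : Type} (M : Matrix a b ℝ) : Matrix a b F :=
  M.map (fun x => (RatFunc.C x : F))

/-- The matrix `z·I` of size `n × n` over `F`. -/
def zI (n : ℕ) : Matrix (Fin n) (Fin n) F := Matrix.scalar (Fin n) (RatFunc.X : F)

/-- the achieved closed-loop responses satisfy the first
system-level affine constraint. -/
theorem achieved_responses_satisfy_first_SLP_constraint
    {n m p : ℕ}
    (A : Matrix (Fin n) (Fin n) ℝ) (B : Matrix (Fin n) (Fin m) ℝ)
    (C : Matrix (Fin p) (Fin n) ℝ) (K : Matrix (Fin m) (Fin p) F)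
    (hinv : IsUnit (zI n - emb A - emb B * K * emb C))
    (R : Matrix (Fin n) (Fin n) F) (N : Matrix (Fin n) (Fin p) F)
    (M : Matrix (Fin m) (Fin n) F) (L : Matrix (Fin m) (Fin p) F)
    (hR : R = (zI n - emb A - emb B * K * emb C)⁻¹)
    (hN : N = R * emb B * K)
    (hM : M = K * emb C * R)
    (hL : L = K * emb C * N + K) :
    (zI n - emb A) * R - emb B * M = 1 ∧ (zI n - emb A) * N - emb B * L = 0 := by
  set S := zI n - emb A - emb B * K * emb C with hS
  have h1 : S * R = 1 := by rw [hR, Matrix.mul_nonsing_inv _ ((Matrix.isUnit_iff_isUnit_det _).mp hinv)]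
  have key : (zI n - emb A) * R - emb B * M = 1 := by
    rw [hM]
    calc (zI n - emb A) * R - emb B * (K * emb C * R)
        = S * R := by rw [hS]; simp only [Matrix.sub_mul, Matrix.mul_add, Matrix.mul_assoc]; all_goals abel
      _ = 1 := h1
  refine ⟨key, ?_⟩
  rw [hN, hL, hN]
  calc (zI n - emb A) * (R * emb B * K) - emb B * (K * emb C * (R * emb B * K) + K)
      = (S * R) * (emb B * K) - emb B * K := by rw [hS]; simp only [Matrix.sub_mul, Matrix.mul_add, Matrix.mul_assoc]; all_goals abel
    _ = 0 := by rw [h1]; simp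
end
end

section
/- Let A, B, C be real matrices of sizes n×n, n×m, p×n respectively, and let K be an m×p transfer matrix over F implementing the output feedback u = K y. Assume the n×n matrix z·I − A − B·K·C is invertible over F, and define the achieved closed-loop responses R = (z·I − A − B·K·C)⁻¹, N = R·B·K, M = K·C·R, L = K·C·N + K. Then these responses satisfy the second system-level affine constraint: R·(z·I − A) − N·C = I and M·(z·I − A) − L·C = 0. -/
open Matrix
noncomputable section

/-- the achieved closed-loop responses satisfy the second
system-level affine constraint. -/
theorem achieved_responses_satisfy_second_SLP_constraint
    {n m p : ℕ}
    (A : Matrix (Fin n) (Fin n) ℝ) (B : Matrix (Fin n) (Fin m) ℝ)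
    (C : Matrix (Fin p) (Fin n) ℝ) (K : Matrix (Fin m) (Fin p) F)
    (hinv : IsUnit (zI n - emb A - emb B * K * emb C))
    (R : Matrix (Fin n) (Fin n) F) (N : Matrix (Fin n) (Fin p) F)
    (M : Matrix (Fin m) (Fin n) F) (L : Matrix (Fin m) (Fin p) F)
    (hR : R = (zI n - emb A - emb B * K * emb C)⁻¹)
    (hN : N = R * emb B * K)
    (hM : M = K * emb C * R)
    (hL : L = K * emb C * N + K) :
    R * (zI n - emb A) - N * emb C = 1 ∧ M * (zI n - emb A) - L * emb C = 0 := by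
  have h1 : R * (zI n - emb A) - N * emb C = 1 := by
    have := hinv.invertible
    have := Matrix.inv_mul_of_invertible (zI n - emb A - emb B * K * emb C)
    rw [hN, hR]
    calc (zI n - emb A - emb B * K * emb C)⁻¹ * (zI n - emb A) -
        (zI n - emb A - emb B * K * emb C)⁻¹ * emb B * K * emb C
        = (zI n - emb A - emb B * K * emb C)⁻¹ *
          (zI n - emb A - emb B * K * emb C) := by
          simp only [Matrix.mul_sub, Matrix.sub_mul, Matrix.mul_assoc]
      _ = 1 := this
  refine ⟨h1, ?_⟩
  rw [hM, hL, hN]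
  have h2 : K * emb C * R * (zI n - emb A) -
      (K * emb C * (R * emb B * K) + K) * emb C
      = K * emb C * (R * (zI n - emb A) - (R * emb B * K) * emb C) - K * emb C := by
    simp only [Matrix.mul_sub, Matrix.sub_mul, Matrix.add_mul, Matrix.mul_add, Matrix.mul_assoc]
    abel
  rw [h2, ← hN, h1]
  simp
end
end

section
/- Let A, B, C be real matrices of sizes n×n, n×m, p×n, and let R (n×n), N (n×p), M (m×n), L (m×p) be transfer matrices over F satisfying the system-level affine constraints (z·I − A)·R − B·M = I, (z·I − A)·N − B·L = 0, R·(z·I − A) − N·C = I, M·(z·I − A) − L·C = 0, with R invertible over F. Define the controller K = L − M·R⁻¹·N. Then the matrix z·I − A − B·K·C is invertible over F and (z·I − A − B·K·C)⁻¹ = R. -/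
open Matrix
noncomputable section

/-- for parameters in the SLP affine subspace, the controller
`K = L - M·R⁻¹·N` yields a well-posed closed loop whose resolvent is `R`. -/
theorem SLP_controller_achieves_R
    {n m p : ℕ}
    (A : Matrix (Fin n) (Fin n) ℝ) (B : Matrix (Fin n) (Fin m) ℝ)
    (C : Matrix (Fin p) (Fin n) ℝ)
    (R : Matrix (Fin n) (Fin n) F) (N : Matrix (Fin n) (Fin p) F)
    (M : Matrix (Fin m) (Fin n) F) (L : Matrix (Fin m) (Fin p) F)
    (h1 : (zI n - emb A) * R - emb B * M = 1)
    (h2 : (zI n - emb A) * N - emb B * L = 0)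
    (h3 : R * (zI n - emb A) - N * emb C = 1)
    (h4 : M * (zI n - emb A) - L * emb C = 0)
    (hR : IsUnit R)
    (K : Matrix (Fin m) (Fin p) F)
    (hK : K = L - M * R⁻¹ * N) :
    IsUnit (zI n - emb A - emb B * K * emb C) ∧
      (zI n - emb A - emb B * K * emb C)⁻¹ = R := by
  set S := zI n - emb A with hS
  set b := emb B with hb
  set c := emb C with hc
  have hdet := (Matrix.isUnit_iff_isUnit_det R).mp hR
  have hinv : R⁻¹ * R = 1 := Matrix.nonsing_inv_mul R hdet
  have hSR : S * R = 1 + b * M := sub_eq_iff_eq_add.mp h1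
  have hBL : S * N = b * L := sub_eq_zero.mp h2
  have hNC : N * c = R * S - 1 := by
    have := sub_eq_iff_eq_add.mp h3; rw [this]; abel
  have e1 : N * c * R = R * (b * M) := by
    rw [hNC, sub_mul, one_mul, mul_assoc, hSR, mul_add, mul_one]
    abel
  have e2 : b * (M * R⁻¹ * N) * c * R = b * M * (b * M) := by
    calc b * (M * R⁻¹ * N) * c * R = b * M * (R⁻¹ * (N * c * R)) := by
          simp only [Matrix.mul_assoc]
      _ = b * M * (R⁻¹ * (R * (b * M))) := by rw [e1]
      _ = b * M * (b * M) := by rw [← mul_assoc R⁻¹, hinv, one_mul]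
  have e3 : b * L * c * R = (1 + b * M) * (b * M) := by
    calc b * L * c * R = S * (N * c * R) := by rw [← hBL]; simp only [Matrix.mul_assoc]
      _ = S * R * (b * M) := by rw [e1, ← mul_assoc]
      _ = (1 + b * M) * (b * M) := by rw [hSR]
  have key : (S - b * K * c) * R = 1 := by
    have expand : (S - b * K * c) * R
        = S * R - b * L * c * R + b * (M * R⁻¹ * N) * c * R := by
      rw [hK, Matrix.mul_sub, Matrix.sub_mul (b * L) _ c, Matrix.sub_mul S,
        Matrix.sub_mul (b * L * c)]
      abel
    rw [expand, hSR, e2, e3, add_mul, one_mul]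
    abel
  exact ⟨(Matrix.isUnit_iff_isUnit_det _).mpr (Matrix.isUnit_det_of_right_inverse key), Matrix.inv_eq_right_inv key⟩
end
end

section
/- Let A, B, C be real matrices of sizes n×n, n×m, p×n, and let R (n×n), N (n×p), M (m×n), L (m×p) be transfer matrices over F satisfying the system-level affine constraints (z·I − A)·R − B·M = I, (z·I − A)·N − B·L = 0, R·(z·I − A) − N·C = I, M·(z·I − A) − L·C = 0, with R invertible over F. Define the controller K = L − M·R⁻¹·N and assume z·I − A − B·K·C is invertible. Then (z·I − A − B·K·C)⁻¹·B·K = N, i.e., the achieved closed-loop response from δy to x equals the prescribed parameter N. -/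
open Matrix
noncomputable section

/-- for parameters in the SLP affine subspace, the controller
`K = L - M·R⁻¹·N` achieves the prescribed response `N` from `δy` to `x`. -/
theorem SLP_controller_achieves_N
    {n m p : ℕ}
    (A : Matrix (Fin n) (Fin n) ℝ) (B : Matrix (Fin n) (Fin m) ℝ)
    (C : Matrix (Fin p) (Fin n) ℝ)
    (R : Matrix (Fin n) (Fin n) F) (N : Matrix (Fin n) (Fin p) F)
    (M : Matrix (Fin m) (Fin n) F) (L : Matrix (Fin m) (Fin p) F)
    (h1 : (zI n - emb A) * R - emb B * M = 1)
    (h2 : (zI n - emb A) * N - emb B * L = 0)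
    (h3 : R * (zI n - emb A) - N * emb C = 1)
    (h4 : M * (zI n - emb A) - L * emb C = 0)
    (hR : IsUnit R)
    (K : Matrix (Fin m) (Fin p) F)
    (hK : K = L - M * R⁻¹ * N)
    (hcl : IsUnit (zI n - emb A - emb B * K * emb C)) :
    (zI n - emb A - emb B * K * emb C)⁻¹ * emb B * K = N := by
  obtain ⟨S, hS⟩ : ∃ S, S = zI n - emb A := ⟨_, rfl⟩
  rw [← hS] at h1 h2 h3 h4 hcl ⊢
  have hRdet : IsUnit R.det := (Matrix.isUnit_iff_isUnit_det R).mp hR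
  have hRi : R⁻¹ * R = 1 := Matrix.nonsing_inv_mul R hRdet
  have hSN : S * N = emb B * L := by rw [← sub_eq_zero]; exact h2
  have hNC : N * emb C = R * S - 1 := by rw [← h3, sub_sub_cancel]
  have hMS : M * S = L * emb C := by rw [← sub_eq_zero]; exact h4
  have e0 : M * R⁻¹ * (R * S) = L * emb C := by
    rw [← Matrix.mul_assoc, Matrix.mul_assoc M R⁻¹ R, hRi, Matrix.mul_one, hMS]
  have e1 : M * R⁻¹ * (N * emb C) * N = L * emb C * N - M * R⁻¹ * N := by
    rw [hNC, Matrix.mul_sub, Matrix.mul_one, Matrix.sub_mul, e0]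
  have hKCN : K * (emb C * N) = L - K := by
    rw [hK, Matrix.sub_mul, ← Matrix.mul_assoc L (emb C) N,
      Matrix.mul_assoc (M * R⁻¹) N (emb C * N), ← Matrix.mul_assoc N (emb C) N,
      ← Matrix.mul_assoc (M * R⁻¹) (N * emb C) N, e1, sub_sub_cancel, sub_sub_cancel]
  have key : (S - emb B * K * emb C) * N = emb B * K := by
    rw [Matrix.sub_mul, Matrix.mul_assoc (emb B * K) (emb C) N,
      Matrix.mul_assoc (emb B) K (emb C * N), hKCN, hSN, Matrix.mul_sub, sub_sub_cancel]
  have hcldet : IsUnit (S - emb B * K * emb C).det :=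
    (Matrix.isUnit_iff_isUnit_det _).mp hcl
  rw [Matrix.mul_assoc]
  nth_rw 2 [← key]
  rw [← Matrix.mul_assoc, Matrix.nonsing_inv_mul _ hcldet, Matrix.one_mul]
end
end

section
/- Let A, B, C be real matrices of sizes n×n, n×m, p×n, and let R (n×n), N (n×p), M (m×n), L (m×p) be transfer matrices over F satisfying the system-level affine constraints (z·I − A)·R − B·M = I, (z·I − A)·N − B·L = 0, R·(z·I − A) − N·C = I, M·(z·I − A) − L·C = 0, with R invertible over F. Define the controller K = L − M·R⁻¹·N and assume z·I − A − B·K·C is invertible. Then K·C·(z·I − A − B·K·C)⁻¹ = M, i.e., the achieved closed-loop response from δx to u equals the prescribed parameter M. -/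
open Matrix
noncomputable section

/-- for parameters in the SLP affine subspace, the controller
`K = L - M·R⁻¹·N` achieves the prescribed response `M` from `δx` to `u`. -/
theorem SLP_controller_achieves_M
    {n m p : ℕ}
    (A : Matrix (Fin n) (Fin n) ℝ) (B : Matrix (Fin n) (Fin m) ℝ)
    (C : Matrix (Fin p) (Fin n) ℝ)
    (R : Matrix (Fin n) (Fin n) F) (N : Matrix (Fin n) (Fin p) F)
    (M : Matrix (Fin m) (Fin n) F) (L : Matrix (Fin m) (Fin p) F)
    (h1 : (zI n - emb A) * R - emb B * M = 1)
    (h2 : (zI n - emb A) * N - emb B * L = 0)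
    (h3 : R * (zI n - emb A) - N * emb C = 1)
    (h4 : M * (zI n - emb A) - L * emb C = 0)
    (hR : IsUnit R)
    (K : Matrix (Fin m) (Fin p) F)
    (hK : K = L - M * R⁻¹ * N)
    (hcl : IsUnit (zI n - emb A - emb B * K * emb C)) :
    K * emb C * (zI n - emb A - emb B * K * emb C)⁻¹ = M := by
  set Z := zI n - emb A with hZ
  clear_value Z
  have hRR : R * R⁻¹ = 1 := Matrix.mul_nonsing_inv R ((Matrix.isUnit_iff_isUnit_det R).mp hR)
  have hBM : emb B * M = Z * R - 1 := by
    rw [← h1]; abel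
  have hBL : emb B * L = Z * N := (sub_eq_zero.mp h2).symm
  have hMZ : M * Z = L * emb C := sub_eq_zero.mp h4
  have hBK : emb B * K = R⁻¹ * N := by
    rw [hK, Matrix.mul_sub, ← Matrix.mul_assoc, ← Matrix.mul_assoc, hBM, hBL,
      Matrix.sub_mul, Matrix.sub_mul, Matrix.one_mul, Matrix.mul_assoc Z R R⁻¹, hRR,
      Matrix.mul_one]
    abel
  have key : K * emb C = M * (Z - emb B * K * emb C) := by
    rw [Matrix.mul_sub, hBK, hMZ, hK, Matrix.sub_mul]
    simp [Matrix.mul_assoc]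
  have hX : (Z - emb B * K * emb C) * (Z - emb B * K * emb C)⁻¹ = 1 :=
    Matrix.mul_nonsing_inv _ ((Matrix.isUnit_iff_isUnit_det _).mp hcl)
  rw [key, Matrix.mul_assoc, hX, Matrix.mul_one]
end
end

section
/- Let A, B, C be real matrices of sizes n×n, n×m, p×n, and let R (n×n), N (n×p), M (m×n), L (m×p) be transfer matrices over F satisfying the system-level affine constraints (z·I − A)·R − B·M = I, (z·I − A)·N − B·L = 0, R·(z·I − A) − N·C = I, M·(z·I − A) − L·C = 0, with R invertible over F. Define the controller K = L − M·R⁻¹·N and assume z·I − A − B·K·C is invertible. Then K·C·(z·I − A − B·K·C)⁻¹·B·K + K = L, i.e., the achieved closed-loop response from δy to u equals the prescribed parameter L. -/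
open Matrix
noncomputable section

section AuxSLP
variable {n' m' p' : Type} [Fintype n'] [Fintype m'] [Fintype p'] [DecidableEq n']
variable {F' : Type} [Field F']

/-- Auxiliary abstract form of the SLP controller computation. -/
theorem slp_abstract_aux
    (S R : Matrix n' n' F') (N : Matrix n' p' F') (Cc : Matrix p' n' F')
    (M : Matrix m' n' F') (L Kk : Matrix m' p' F') (B : Matrix n' m' F')
    (h1 : S * R - B * M = 1)
    (h2 : S * N - B * L = 0)
    (h3 : R * S - N * Cc = 1)
    (h4 : M * S - L * Cc = 0)
    (hRiR : R⁻¹ * R = 1) (hRRi : R * R⁻¹ = 1)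
    (hK : Kk = L - M * R⁻¹ * N) :
    Kk * Cc * R * B * Kk + Kk = L ∧ (S - B * Kk * Cc) * R = 1 := by
  have hSR : S * R = 1 + B * M := by rw [← h1]; abel
  have hNC : N * Cc = R * S - 1 := by rw [← h3]; abel
  have hLC : L * Cc = M * S := (sub_eq_zero.mp h4).symm
  have hBL : B * L = S * N := (sub_eq_zero.mp h2).symm
  have hKCR : Kk * Cc * R = M := by
    rw [hK, Matrix.sub_mul, Matrix.sub_mul, hLC,
        Matrix.mul_assoc (M * R⁻¹) N Cc, hNC, Matrix.mul_sub, Matrix.mul_one,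
        Matrix.sub_mul, ← Matrix.mul_assoc (M * R⁻¹) R S,
        Matrix.mul_assoc M R⁻¹ R, hRiR, Matrix.mul_one,
        Matrix.mul_assoc M S R, hSR, Matrix.mul_add, Matrix.mul_one]
    abel
  constructor
  · rw [Matrix.mul_assoc (Kk * Cc * R) B Kk, hKCR, hK, Matrix.mul_sub, Matrix.mul_sub]
    have e1 : M * (B * L) = M * S * N := by rw [hBL, ← Matrix.mul_assoc]
    have e2 : M * (B * (M * R⁻¹ * N)) + M * R⁻¹ * N = M * S * N := by
      have e3 : M * (B * (M * R⁻¹ * N)) = M * B * M * (R⁻¹ * N) := by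
        rw [Matrix.mul_assoc M R⁻¹ N, ← Matrix.mul_assoc B M (R⁻¹ * N),
            ← Matrix.mul_assoc M (B * M) (R⁻¹ * N), ← Matrix.mul_assoc M B M]
      have e4 : M * R⁻¹ * N = M * (R⁻¹ * N) := Matrix.mul_assoc M R⁻¹ N
      rw [e3, e4, ← Matrix.add_mul]
      have e5 : M * B * M + M = M * (S * R) := by
        rw [hSR, Matrix.mul_add, Matrix.mul_one, ← Matrix.mul_assoc]; abel
      rw [e5, ← Matrix.mul_assoc M S R, Matrix.mul_assoc (M * S) R (R⁻¹ * N),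
          ← Matrix.mul_assoc R R⁻¹ N, hRRi, Matrix.one_mul]
    have e6 : M * (B * (M * R⁻¹ * N)) = M * S * N - M * R⁻¹ * N := by
      rw [← e2]; abel
    rw [e1, e6]; abel
  · rw [Matrix.sub_mul, hSR, Matrix.mul_assoc (B * Kk) Cc R,
        Matrix.mul_assoc B Kk (Cc * R), ← Matrix.mul_assoc Kk Cc R, hKCR]
    abel
end AuxSLP

/-- for parameters in the SLP affine subspace, the controller
`K = L - M·R⁻¹·N` achieves the prescribed response `L` from `δy` to `u`. -/
theorem SLP_controller_achieves_L
    {n m p : ℕ}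
    (A : Matrix (Fin n) (Fin n) ℝ) (B : Matrix (Fin n) (Fin m) ℝ)
    (C : Matrix (Fin p) (Fin n) ℝ)
    (R : Matrix (Fin n) (Fin n) F) (N : Matrix (Fin n) (Fin p) F)
    (M : Matrix (Fin m) (Fin n) F) (L : Matrix (Fin m) (Fin p) F)
    (h1 : (zI n - emb A) * R - emb B * M = 1)
    (h2 : (zI n - emb A) * N - emb B * L = 0)
    (h3 : R * (zI n - emb A) - N * emb C = 1)
    (h4 : M * (zI n - emb A) - L * emb C = 0)
    (hR : IsUnit R)
    (K : Matrix (Fin m) (Fin p) F)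
    (hK : K = L - M * R⁻¹ * N)
    (hcl : IsUnit (zI n - emb A - emb B * K * emb C)) :
    K * emb C * (zI n - emb A - emb B * K * emb C)⁻¹ * emb B * K + K = L := by
  have hRdet : IsUnit R.det := (Matrix.isUnit_iff_isUnit_det R).mp hR
  have hRiR : R⁻¹ * R = 1 := Matrix.nonsing_inv_mul R hRdet
  have hRRi : R * R⁻¹ = 1 := Matrix.mul_nonsing_inv R hRdet
  obtain ⟨hmain, hright⟩ :=
    slp_abstract_aux (zI n - emb A) R N (emb C) M L K (emb B) h1 h2 h3 h4 hRiR hRRi hK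
  have hinv : (zI n - emb A - emb B * K * emb C)⁻¹ = R :=
    Matrix.inv_eq_right_inv hright
  rw [hinv]
  exact hmain
end
end

section
/- Let A, B, C be real matrices of sizes n×n, n×m, p×n, and let K be an m×p transfer matrix over F. Assume z·I − A − B·K·C is invertible over F, define the achieved closed-loop responses R = (z·I − A − B·K·C)⁻¹, N = R·B·K, M = K·C·R, L = K·C·N + K, and assume R is invertible. Then the controller is recovered from the responses: L − M·R⁻¹·N = K. -/
open Matrix
noncomputable section

/-- the controller is recovered from the achieved closed-loop
responses via `K = L - M·R⁻¹·N`. -/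
theorem controller_recovered_from_responses
    {n m p : ℕ}
    (A : Matrix (Fin n) (Fin n) ℝ) (B : Matrix (Fin n) (Fin m) ℝ)
    (C : Matrix (Fin p) (Fin n) ℝ) (K : Matrix (Fin m) (Fin p) F)
    (hinv : IsUnit (zI n - emb A - emb B * K * emb C))
    (R : Matrix (Fin n) (Fin n) F) (N : Matrix (Fin n) (Fin p) F)
    (M : Matrix (Fin m) (Fin n) F) (L : Matrix (Fin m) (Fin p) F)
    (hR : R = (zI n - emb A - emb B * K * emb C)⁻¹)
    (hN : N = R * emb B * K)
    (hM : M = K * emb C * R)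
    (hL : L = K * emb C * N + K)
    (hRu : IsUnit R) :
    L - M * R⁻¹ * N = K := by
  have h : R * R⁻¹ = 1 := mul_nonsing_inv R (((Matrix.isUnit_iff_isUnit_det R).mp hRu))
  subst hL hM
  calc K * emb C * N + K - K * emb C * R * R⁻¹ * N
      = K * emb C * N + K - K * emb C * (R * R⁻¹) * N := by
        rw [Matrix.mul_assoc (K * emb C) R R⁻¹]
    _ = K := by rw [h, Matrix.mul_one]; abel
end
end

section
/- Let (A_k, B_k, C_k) be real matrices of sizes n×n, n×p, m×n (a realization of the controller) and let G be a p×m transfer matrix over F (the plant). Assume z·I − A_k − B_k·G·C_k is invertible over F, and define the achieved dual system responses R_k = (z·I − A_k − B_k·G·C_k)⁻¹, N_k = R_k·B_k·G, M_k = G·C_k·R_k, L_k = G·C_k·N_k + G. Then they satisfy the dual system-level affine constraints: (z·I − A_k)·R_k − B_k·M_k = I, (z·I − A_k)·N_k − B_k·L_k = 0, R_k·(z·I − A_k) − N_k·C_k = I, and M_k·(z·I − A_k) − L_k·C_k = 0. -/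
open Matrix
noncomputable section

/-- the achieved dual system responses satisfy the dual
system-level affine constraints. -/
theorem achieved_dual_responses_satisfy_constraints
    {n m p : ℕ}
    (Ak : Matrix (Fin n) (Fin n) ℝ) (Bk : Matrix (Fin n) (Fin p) ℝ)
    (Ck : Matrix (Fin m) (Fin n) ℝ) (G : Matrix (Fin p) (Fin m) F)
    (hinv : IsUnit (zI n - emb Ak - emb Bk * G * emb Ck))
    (Rk : Matrix (Fin n) (Fin n) F) (Nk : Matrix (Fin n) (Fin m) F)
    (Mk : Matrix (Fin p) (Fin n) F) (Lk : Matrix (Fin p) (Fin m) F)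
    (hR : Rk = (zI n - emb Ak - emb Bk * G * emb Ck)⁻¹)
    (hN : Nk = Rk * emb Bk * G)
    (hM : Mk = G * emb Ck * Rk)
    (hL : Lk = G * emb Ck * Nk + G) :
    (zI n - emb Ak) * Rk - emb Bk * Mk = 1 ∧
    (zI n - emb Ak) * Nk - emb Bk * Lk = 0 ∧
    Rk * (zI n - emb Ak) - Nk * emb Ck = 1 ∧
    Mk * (zI n - emb Ak) - Lk * emb Ck = 0 := by
  set S : Matrix (Fin n) (Fin n) F := zI n - emb Ak - emb Bk * G * emb Ck with hS
  have hdet : IsUnit S.det := (Matrix.isUnit_iff_isUnit_det S).mp hinv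
  have h1 : S * Rk = 1 := by rw [hR]; exact Matrix.mul_nonsing_inv S hdet
  have h2 : Rk * S = 1 := by rw [hR]; exact Matrix.nonsing_inv_mul S hdet
  have hzA : zI n - emb Ak = S + emb Bk * G * emb Ck := by rw [hS]; abel
  subst hL hM hN
  refine ⟨?_, ?_, ?_, ?_⟩
  · rw [hzA]
    simp only [Matrix.add_mul, Matrix.mul_assoc]
    rw [add_sub_cancel_right, h1]
  · rw [hzA]
    have h1' : S * (Rk * (emb Bk * G)) = emb Bk * G := by
      rw [← Matrix.mul_assoc, h1, Matrix.one_mul]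
    simp only [Matrix.add_mul, Matrix.mul_add, Matrix.mul_assoc, h1']
    abel
  · rw [hzA]
    simp only [Matrix.mul_add, Matrix.mul_assoc]
    rw [add_sub_cancel_right, h2]
  · rw [hzA]
    simp only [Matrix.add_mul, Matrix.mul_add, Matrix.mul_assoc, h2, Matrix.mul_one]
    abel
end
end

section
/- Let (A_k, B_k, C_k) be real matrices of sizes n×n, n×p, m×n, and let R_k (n×n), N_k (n×m), M_k (p×n), L_k (p×m) be transfer matrices over F satisfying the dual system-level affine constraints (z·I − A_k)·R_k − B_k·M_k = I, (z·I − A_k)·N_k − B_k·L_k = 0, R_k·(z·I − A_k) − N_k·C_k = I, M_k·(z·I − A_k) − L_k·C_k = 0, with R_k invertible. Define the plant Ĝ = L_k − M_k·R_k⁻¹·N_k. Then z·I − A_k − B_k·Ĝ·C_k is invertible over F, and the closed loop of the controller (A_k, B_k, C_k) with the plant Ĝ achieves exactly the prescribed dual responses: (z·I − A_k − B_k·Ĝ·C_k)⁻¹ = R_k, (z·I − A_k − B_k·Ĝ·C_k)⁻¹·B_k·Ĝ = N_k, Ĝ·C_k·(z·I − A_k − B_k·Ĝ·C_k)⁻¹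 = M_k, and Ĝ·C_k·(z·I − A_k − B_k·Ĝ·C_k)⁻¹·B_k·Ĝ + Ĝ = L_k. -/
open Matrix
noncomputable section

/-- for dual parameters in the dual SLP affine subspace, the plant
`Ĝ = L_k − M_k·R_k⁻¹·N_k` yields a well-posed dual closed loop achieving exactly
the prescribed dual responses. -/
theorem dual_SLP_plant_achieves_responses
    {n m p : ℕ}
    (Ak : Matrix (Fin n) (Fin n) ℝ) (Bk : Matrix (Fin n) (Fin p) ℝ)
    (Ck : Matrix (Fin m) (Fin n) ℝ)
    (Rk : Matrix (Fin n) (Fin n) F) (Nk : Matrix (Fin n) (Fin m) F)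
    (Mk : Matrix (Fin p) (Fin n) F) (Lk : Matrix (Fin p) (Fin m) F)
    (h1 : (zI n - emb Ak) * Rk - emb Bk * Mk = 1)
    (h2 : (zI n - emb Ak) * Nk - emb Bk * Lk = 0)
    (h3 : Rk * (zI n - emb Ak) - Nk * emb Ck = 1)
    (h4 : Mk * (zI n - emb Ak) - Lk * emb Ck = 0)
    (hRu : IsUnit Rk)
    (Ghat : Matrix (Fin p) (Fin m) F)
    (hG : Ghat = Lk - Mk * Rk⁻¹ * Nk) :
    IsUnit (zI n - emb Ak - emb Bk * Ghat * emb Ck) ∧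
    (zI n - emb Ak - emb Bk * Ghat * emb Ck)⁻¹ = Rk ∧
    (zI n - emb Ak - emb Bk * Ghat * emb Ck)⁻¹ * emb Bk * Ghat = Nk ∧
    Ghat * emb Ck * (zI n - emb Ak - emb Bk * Ghat * emb Ck)⁻¹ = Mk ∧
    Ghat * emb Ck * (zI n - emb Ak - emb Bk * Ghat * emb Ck)⁻¹ * emb Bk * Ghat + Ghat = Lk := by
  have hdet : IsUnit Rk.det := (Matrix.isUnit_iff_isUnit_det Rk).mp hRu
  set S : Matrix (Fin n) (Fin n) F := zI n - emb Ak with hS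
  set B : Matrix (Fin n) (Fin p) F := emb Bk with hB
  set C : Matrix (Fin m) (Fin n) F := emb Ck with hC
  have e1 : B * Mk = S * Rk - 1 := by rw [← h1]; abel
  have e2 : B * Lk = S * Nk := (sub_eq_zero.mp h2).symm
  have e3 : Nk * C = Rk * S - 1 := by rw [← h3]; abel
  have e4 : Lk * C = Mk * S := (sub_eq_zero.mp h4).symm
  have g1 : ∀ {q : ℕ} (X : Matrix (Fin n) (Fin q) F), Rk⁻¹ * (Rk * X) = X := by
    intro q X
    rw [← Matrix.mul_assoc, Matrix.nonsing_inv_mul Rk hdet, Matrix.one_mul]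
  have g2 : ∀ {q : ℕ} (X : Matrix (Fin n) (Fin q) F), Rk * (Rk⁻¹ * X) = X := by
    intro q X
    rw [← Matrix.mul_assoc, Matrix.mul_nonsing_inv Rk hdet, Matrix.one_mul]
  have f1 : ∀ {q : ℕ} (X : Matrix (Fin n) (Fin q) F),
      B * (Mk * X) = S * (Rk * X) - X := by
    intro q X
    rw [← Matrix.mul_assoc, e1, Matrix.sub_mul, Matrix.one_mul, Matrix.mul_assoc]
  have hGC : Ghat * C = Mk * Rk⁻¹ := by
    rw [hG, Matrix.sub_mul, e4, Matrix.mul_assoc (Mk * Rk⁻¹) Nk C, e3,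
      Matrix.mul_assoc Mk Rk⁻¹ (Rk * S - 1), Matrix.mul_sub Rk⁻¹, Matrix.mul_one, g1,
      Matrix.mul_sub Mk S Rk⁻¹]
    abel
  have hM : Ghat * C * Rk = Mk := by
    rw [hGC, Matrix.mul_assoc, Matrix.nonsing_inv_mul Rk hdet, Matrix.mul_one]
  have hmain : (S - B * Ghat * C) * Rk = 1 := by
    rw [Matrix.sub_mul, Matrix.mul_assoc B Ghat C, Matrix.mul_assoc B (Ghat * C) Rk, hM]
    exact h1
  have hU : IsUnit (S - B * Ghat * C) := by
    rw [Matrix.isUnit_iff_isUnit_det]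
    exact Matrix.isUnit_det_of_right_inverse hmain
  have hinv : (S - B * Ghat * C)⁻¹ = Rk := Matrix.inv_eq_right_inv hmain
  have hBG : B * Ghat = Rk⁻¹ * Nk := by
    rw [hG]
    simp only [Matrix.mul_sub, Matrix.mul_assoc, e2, f1, g2]
    abel
  have hN : Rk * (B * Ghat) = Nk := by rw [hBG, g2]
  refine ⟨hU, hinv, ?_, by rw [hinv]; exact hM, ?_⟩
  · rw [hinv, Matrix.mul_assoc, hN]
  · rw [hinv, hM, Matrix.mul_assoc, hBG, hG, ← Matrix.mul_assoc Mk Rk⁻¹ Nk]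
    abel
end
end

section
/- Let (A_k, B_k, C_k) be real matrices of sizes n×n, n×p, m×n and G a p×m transfer matrix over F. Assume z·I − A_k, I − G·K, and z·I − A_k − B_k·G·C_k are all invertible over F, where K = C_k·(z·I − A_k)⁻¹·B_k. Then G·C_k·(z·I − A_k − B_k·G·C_k)⁻¹ = (I − G·K)⁻¹·G·C_k·(z·I − A_k)⁻¹, and G·C_k·(z·I − A_k − B_k·G·C_k)⁻¹·B_k·G + G = (I − G·K)⁻¹·G. In other words, the achieved dual responses M_k = G·C_k·R_k and L_k = G·C_k·R_k·B_k·G + G (with R_k = (z·I − A_k − B_k·G·C_k)⁻¹) coincide with the closed-loop formulas M_k = (I − G·K)⁻¹·G·C_k·(z·I − A_k)⁻¹ and L_k = (I − G·K)⁻¹·G. -/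
open Matrix
noncomputable section

/-- the achieved dual responses `M_k = G·C_k·R_k` and
`L_k = G·C_k·R_k·B_k·G + G` coincide with the closed-loop formulas
`(I − G·K)⁻¹·G·C_k·(z·I − A_k)⁻¹` and `(I − G·K)⁻¹·G`. -/
theorem dual_responses_closed_loop_formulas
    {n m p : ℕ}
    (Ak : Matrix (Fin n) (Fin n) ℝ) (Bk : Matrix (Fin n) (Fin p) ℝ)
    (Ck : Matrix (Fin m) (Fin n) ℝ) (G : Matrix (Fin p) (Fin m) F)
    (K : Matrix (Fin m) (Fin p) F)
    (hK : K = emb Ck * (zI n - emb Ak)⁻¹ * emb Bk)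
    (hz : IsUnit (zI n - emb Ak))
    (hGK : IsUnit ((1 : Matrix (Fin p) (Fin p) F) - G * K))
    (hcl : IsUnit (zI n - emb Ak - emb Bk * G * emb Ck)) :
    G * emb Ck * (zI n - emb Ak - emb Bk * G * emb Ck)⁻¹
      = ((1 : Matrix (Fin p) (Fin p) F) - G * K)⁻¹ * G * emb Ck * (zI n - emb Ak)⁻¹ ∧
    G * emb Ck * (zI n - emb Ak - emb Bk * G * emb Ck)⁻¹ * emb Bk * G + G
      = ((1 : Matrix (Fin p) (Fin p) F) - G * K)⁻¹ * G := by
  subst hK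
  set Z : Matrix (Fin n) (Fin n) F := zI n - emb Ak with hZdef
  set P : Matrix (Fin n) (Fin n) F := Z - emb Bk * G * emb Ck with hPdef
  set X : Matrix (Fin p) (Fin p) F :=
    (1 : Matrix (Fin p) (Fin p) F) - G * (emb Ck * Z⁻¹ * emb Bk) with hXdef
  have hZd : IsUnit Z.det := (Matrix.isUnit_iff_isUnit_det _).mp hz
  have hPd : IsUnit P.det := (Matrix.isUnit_iff_isUnit_det _).mp hcl
  have hXd : IsUnit X.det := (Matrix.isUnit_iff_isUnit_det _).mp hGK
  have hZZ : Z⁻¹ * Z = 1 := Matrix.nonsing_inv_mul _ hZd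
  have hPP : P * P⁻¹ = 1 := Matrix.mul_nonsing_inv _ hPd
  have hXX : X⁻¹ * X = 1 := Matrix.nonsing_inv_mul _ hXd
  have key : X * (G * emb Ck) = G * emb Ck * Z⁻¹ * P := by
    rw [hXdef, hPdef, Matrix.sub_mul, Matrix.mul_sub, Matrix.one_mul]
    simp only [Matrix.mul_assoc, hZZ, Matrix.mul_one]
  have h1 : G * emb Ck * P⁻¹ = X⁻¹ * G * emb Ck * Z⁻¹ := by
    calc G * emb Ck * P⁻¹ = X⁻¹ * (X * (G * emb Ck)) * P⁻¹ := by
          rw [← Matrix.mul_assoc, hXX, Matrix.one_mul]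
      _ = X⁻¹ * (G * emb Ck * Z⁻¹ * P) * P⁻¹ := by rw [key]
      _ = X⁻¹ * (G * emb Ck * Z⁻¹) * (P * P⁻¹) := by
          simp only [Matrix.mul_assoc]
      _ = X⁻¹ * G * emb Ck * Z⁻¹ := by
          rw [hPP, Matrix.mul_one]; simp only [Matrix.mul_assoc]
  have h3 : G * (emb Ck * Z⁻¹ * emb Bk) * G + X * G = G := by
    rw [hXdef, Matrix.sub_mul, Matrix.one_mul]; abel
  have h2 : X⁻¹ * G * emb Ck * Z⁻¹ * emb Bk * G + G = X⁻¹ * G := by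
    calc X⁻¹ * G * emb Ck * Z⁻¹ * emb Bk * G + G
        = X⁻¹ * (G * (emb Ck * Z⁻¹ * emb Bk) * G + X * G) := by
          rw [Matrix.mul_add, ← Matrix.mul_assoc X⁻¹ X G, hXX, Matrix.one_mul]
          simp only [Matrix.mul_assoc]
      _ = X⁻¹ * G := by rw [h3]
  exact ⟨h1, by rw [h1, h2]⟩
end
end
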